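/- Non-identifiability of the general hazard structure with Weibull baseline: let h₀(t) = λκt^{κ−1} for t > 0 be a Weibull baseline hazard with λ > 0, κ > 0. Then for all t > 0 and all a, b ∈ ℝ, h₀(t · exp a) · exp b = h₀(t) · exp((κ−1)a + b). Consequently, for any two pairs (a, b) and (a′, b′) with (κ−1)a + b = (κ−1)a′ + b′, the GH hazards t ↦ h₀(t·eᵃ)·e^b and t ↦ h₀(t·e^{a′})·e^{b′} coincide on (0,∞); in particular, there exist distinct pairs (a, b) ≠ (a′, b′) producing identical hazard functions, so the general hazard structure with a Weibull baseline is non-identifiable. -/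
import Mathlib


open Real

/-- Non-identifiability of the GH structure with Weibull baseline
`h₀ t = λ * κ * t ^ (κ - 1)` (for `λ, κ > 0`): for every `t > 0` and all `a b : ℝ`,
`h₀ (t * exp a) * exp b = h₀ t * exp ((κ - 1) * a + b)`; hence any two pairs
`(a, b)`, `(a', b')` with `(κ-1)*a + b = (κ-1)*a' + b'` give identical GH hazards
on `(0, ∞)`, and in particular there exist distinct pairs producing identical
hazard functions. -/
theorem gh_weibull_nonidentifiable
    (lam kappa : ℝ) (hlam : 0 < lam) (hkappa : 0 < kappa)
    (h₀ : ℝ → ℝ) (hweib : ∀ t : ℝ, 0 < t → h₀ t = lam * kappa * t ^ (kappa - 1)) :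
    (∀ t : ℝ, 0 < t → ∀ a b : ℝ,
        h₀ (t * Real.exp a) * Real.exp b = h₀ t * Real.exp ((kappa - 1) * a + b))
    ∧ (∀ a b a' b' : ℝ, (kappa - 1) * a + b = (kappa - 1) * a' + b' →
        ∀ t : ℝ, 0 < t →
          h₀ (t * Real.exp a) * Real.exp b = h₀ (t * Real.exp a') * Real.exp b')
    ∧ (∃ a b a' b' : ℝ, (a, b) ≠ (a', b') ∧
        ∀ t : ℝ, 0 < t →
          h₀ (t * Real.exp a) * Real.exp b = h₀ (t * Real.exp a') * Real.exp b') := by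
  have key : ∀ t : ℝ, 0 < t → ∀ a b : ℝ,
      h₀ (t * Real.exp a) * Real.exp b = h₀ t * Real.exp ((kappa - 1) * a + b) := by
    intro t ht a b
    rw [hweib t ht, hweib (t * Real.exp a) (mul_pos ht (Real.exp_pos a)),
      Real.mul_rpow ht.le (Real.exp_pos a).le, ← Real.exp_mul, Real.exp_add]
    ring_nf
  refine ⟨key, ?_, ?_⟩
  · intro a b a' b' h t ht
    rw [key t ht a b, key t ht a' b', h]
  · refine ⟨0, 0, 1, -(kappa - 1), ?_, ?_⟩
    · intro h
      have : (0:ℝ) = 1 := congrArg Prod.fst h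
      norm_num at this
    · intro t ht
      rw [key t ht, key t ht]
      ring_nf
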